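/- arXiv:2111.08466 — 6 statements merged into one kernel-verified Lean document; each statement's English description precedes it below -/
import Mathlib

section
/- Let d ≥ 6 be even, t = d/2. Let P be the set of all x ∈ {0,1}^d with zeros in the last two coordinates and exactly t ones among the first d-2 coordinates, and let N consist of the two vectors that are all ones except a zero in the last coordinate, respectively a zero in coordinate d-1. Let 𝒦 be all rules S ⊆ {1,...,d-2} with |S| = t. Then for any rule set K ⊆ 𝒦 with |K| = m: the number of points of P satisfying no rule of K equals |P| − m, and the total Hamming loss of K on this data equals (|P| − m) + 2m = binom(d-2, t) + m. -/
/-- A point `x ∈ {0,1}^d` satisfies rule `S` if `x j = 1` for all `j ∈ S`. -/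
def Satisfies {d : ℕ} (x : Fin d → Bool) (S : Finset (Fin d)) : Prop :=
  ∀ j ∈ S, x j = true

instance {d : ℕ} (x : Fin d → Bool) (S : Finset (Fin d)) : Decidable (Satisfies x S) :=
  inferInstanceAs (Decidable (∀ j ∈ S, x j = true))

theorem stmt2 (d : ℕ) (hd : 6 ≤ d) (hev : Even d) (t : ℕ) (ht : t = d / 2)
    (P : Finset (Fin d → Bool))
    (hP : P = Finset.univ.filter (fun x : Fin d → Bool =>
      (∀ j : Fin d, d - 2 ≤ (j : ℕ) → x j = false) ∧
      (Finset.univ.filter (fun j : Fin d => (j : ℕ) < d - 2 ∧ x j = true)).card = t))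
    (n1 n2 : Fin d → Bool)
    (hn1 : n1 = fun j : Fin d => decide ((j : ℕ) ≠ d - 1))
    (hn2 : n2 = fun j : Fin d => decide ((j : ℕ) ≠ d - 2))
    (𝒦 : Finset (Finset (Fin d)))
    (h𝒦 : 𝒦 = Finset.univ.filter (fun S : Finset (Fin d) =>
      (∀ j ∈ S, (j : ℕ) < d - 2) ∧ S.card = t))
    (K : Finset (Finset (Fin d))) (hK : K ⊆ 𝒦) (m : ℕ) (hm : K.card = m) :
    (P.filter (fun x => ∀ S ∈ K, ¬ Satisfies x S)).card = P.card - m ∧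
    (P.filter (fun x => ∀ S ∈ K, ¬ Satisfies x S)).card
        + ((K.filter (fun S => Satisfies n1 S)).card
            + (K.filter (fun S => Satisfies n2 S)).card)
      = (P.card - m) + 2 * m ∧
    (P.filter (fun x => ∀ S ∈ K, ¬ Satisfies x S)).card
        + ((K.filter (fun S => Satisfies n1 S)).card
            + (K.filter (fun S => Satisfies n2 S)).card)
      = Nat.choose (d - 2) t + m := by
  classical
  set supp : (Fin d → Bool) → Finset (Fin d) :=
    fun x => Finset.univ.filter (fun j => x j = true) with hsupp
  have hmemP : ∀ x, x ∈ P ↔ ((∀ j : Fin d, d - 2 ≤ (j : ℕ) → x j = false) ∧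
      (Finset.univ.filter (fun j : Fin d => (j : ℕ) < d - 2 ∧ x j = true)).card = t) := by
    intro x; simp [hP]
  have hmem𝒦 : ∀ S, S ∈ 𝒦 ↔ ((∀ j ∈ S, (j : ℕ) < d - 2) ∧ S.card = t) := by
    intro S; simp [h𝒦]
  have hsuppP : ∀ x ∈ P, supp x ∈ 𝒦 := by
    intro x hx
    rw [hmemP] at hx
    obtain ⟨h1, h2⟩ := hx
    have hlt : ∀ j : Fin d, x j = true → (j : ℕ) < d - 2 := by
      intro j hj
      by_contra h
      have := h1 j (by omega)
      simp [this] at hj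
    rw [hmem𝒦]
    constructor
    · intro j hj
      exact hlt j (by simpa [supp] using hj)
    · rw [← h2]
      congr 1
      ext j
      simp only [Finset.mem_filter, Finset.mem_univ, true_and, supp]
      exact ⟨fun h => ⟨hlt j h, h⟩, fun h => h.2⟩
  set φ : Finset (Fin d) → (Fin d → Bool) := fun S j => decide (j ∈ S) with hφ
  have hφP : ∀ S ∈ 𝒦, φ S ∈ P := by
    intro S hS
    rw [hmem𝒦] at hS
    rw [hmemP]
    constructor
    · intro j hj
      simp only [φ, decide_eq_false_iff_not]
      intro hmem
      have := hS.1 j hmem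
      omega
    · rw [← hS.2]
      congr 1
      ext j
      simp only [Finset.mem_filter, Finset.mem_univ, true_and, φ, decide_eq_true_eq]
      exact ⟨fun h => h.2, fun h => ⟨hS.1 j h, h⟩⟩
  have hsuppφ : ∀ S, supp (φ S) = S := by
    intro S; ext j; simp [supp, φ]
  have hφsupp : ∀ x, φ (supp x) = x := by
    intro x; funext j
    simp only [φ, supp, Finset.mem_filter, Finset.mem_univ, true_and]
    cases h : x j <;> simp [h]
  have hsat : ∀ x ∈ P, ∀ S ∈ 𝒦, (Satisfies x S ↔ S = supp x) := by
    intro x hx S hS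
    constructor
    · intro h
      have hsub : S ⊆ supp x := by
        intro j hj
        simp only [supp, Finset.mem_filter, Finset.mem_univ, true_and]
        exact h j hj
      have hc1 : S.card = t := ((hmem𝒦 S).1 hS).2
      have hc2 : (supp x).card = t := ((hmem𝒦 _).1 (hsuppP x hx)).2
      exact Finset.eq_of_subset_of_card_le hsub (by omega)
    · rintro rfl
      intro j hj
      simpa [supp] using (Finset.mem_filter.1 hj).2
  have hfilt : P.filter (fun x => ∀ S ∈ K, ¬ Satisfies x S)
      = P.filter (fun x => supp x ∉ K) := by
    apply Finset.filter_congr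
    intro x hx
    constructor
    · intro h hmem
      exact h _ hmem ((hsat x hx _ (hK hmem)).2 rfl)
    · intro h S hS hsatis
      exact h (((hsat x hx S (hK hS)).1 hsatis) ▸ hS)
  have hyes : (P.filter (fun x => supp x ∈ K)).card = m := by
    rw [← hm]
    apply Finset.card_bij (fun x _ => supp x)
    · intro x hx; exact (Finset.mem_filter.1 hx).2
    · intro x hx y hy h
      rw [← hφsupp x, ← hφsupp y, h]
    · intro S hS
      refine ⟨φ S, Finset.mem_filter.2 ⟨hφP S (hK hS), ?_⟩, hsuppφ S⟩
      rw [hsuppφ]; exact hS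
  have hsum : (P.filter (fun x => supp x ∈ K)).card
      + (P.filter (fun x => supp x ∉ K)).card = P.card :=
    Finset.card_filter_add_card_filter_not (fun x => supp x ∈ K)
  have hPcard : P.card = Nat.choose (d - 2) t := by
    have hbij : P.card = 𝒦.card := by
      apply Finset.card_bij (fun x _ => supp x)
      · exact hsuppP
      · intro x hx y hy h; rw [← hφsupp x, ← hφsupp y, h]
      · intro S hS; exact ⟨φ S, hφP S hS, hsuppφ S⟩
    have hA : (Finset.univ.filter (fun j : Fin d => (j : ℕ) < d - 2)).card = d - 2 := by
      rw [show Finset.univ.filter (fun j : Fin d => (j : ℕ) < d - 2)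
          = Finset.univ.map (Fin.castLEEmb (show d - 2 ≤ d by omega)) from ?_]
      · simp
      · ext j
        simp only [Finset.mem_filter, Finset.mem_univ, true_and, Finset.mem_map,
          Fin.castLEEmb_apply]
        constructor
        · intro h; exact ⟨⟨j, h⟩, by ext; rfl⟩
        · rintro ⟨i, rfl⟩; exact i.2
    have h𝒦eq : 𝒦 = (Finset.univ.filter (fun j : Fin d => (j : ℕ) < d - 2)).powersetCard t := by
      ext S
      rw [hmem𝒦, Finset.mem_powersetCard]
      constructor
      · rintro ⟨h1, h2⟩
        exact ⟨fun j hj => by simp [h1 j hj], h2⟩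
      · rintro ⟨h1, h2⟩
        refine ⟨fun j hj => ?_, h2⟩
        simpa using h1 hj
    rw [hbij, h𝒦eq, Finset.card_powersetCard, hA]
  have hmle : m ≤ P.card := by
    rw [← hyes]; exact Finset.card_filter_le _ _
  have hno : (P.filter (fun x => ∀ S ∈ K, ¬ Satisfies x S)).card = P.card - m := by
    rw [hfilt]; omega
  have hn1f : K.filter (fun S => Satisfies n1 S) = K := by
    apply Finset.filter_true_of_mem
    intro S hS j hj
    have := ((hmem𝒦 S).1 (hK hS)).1 j hj
    simp only [hn1, decide_eq_true_eq]
    omega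
  have hn2f : K.filter (fun S => Satisfies n2 S) = K := by
    apply Finset.filter_true_of_mem
    intro S hS j hj
    have := ((hmem𝒦 S).1 (hK hS)).1 j hj
    simp only [hn2, decide_eq_true_eq]
    omega
  refine ⟨hno, ?_, ?_⟩
  · rw [hno, hn1f, hn2f, hm]; ring
  · rw [hno, hn1f, hn2f, hm, ← hPcard]; omega
end

section
/- In the construction of the previous context (P, N, 𝒦 with d ≥ 6 even, t = d/2), the 0-1 loss of a rule set K ⊆ 𝒦 with |K| = m equals (binom(d-2,t) − m) + 2·𝟙(m > 0). Consequently the minimum 0-1 loss over all K ⊆ 𝒦 equals 2 (attained by K = 𝒦), while the unique minimizer of Hamming loss is the empty rule set, which has 0-1 loss binom(d-2,t). -/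
/-- 0-1 loss of rule set `K` on positives `P` and the two negative points `n1, n2`:
number of positives covered by no rule of `K`, plus the number of negatives covered
by at least one rule of `K`. -/
def Loss01 {d : ℕ} (P : Finset (Fin d → Bool)) (n1 n2 : Fin d → Bool)
    (K : Finset (Finset (Fin d))) : ℕ :=
  (P.filter (fun x => ∀ S ∈ K, ¬ Satisfies x S)).card
    + ((if ∃ S ∈ K, Satisfies n1 S then 1 else 0)
        + (if ∃ S ∈ K, Satisfies n2 S then 1 else 0))

/-- Hamming loss of rule set `K`: number of uncovered positives, plus for each negative
point the number of rules of `K` it satisfies. -/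
def LossH {d : ℕ} (P : Finset (Fin d → Bool)) (n1 n2 : Fin d → Bool)
    (K : Finset (Finset (Fin d))) : ℕ :=
  (P.filter (fun x => ∀ S ∈ K, ¬ Satisfies x S)).card
    + ((K.filter (fun S => Satisfies n1 S)).card
        + (K.filter (fun S => Satisfies n2 S)).card)

namespace Stmt3Aux

/-- The indicator point of a rule `S`. -/
def xOf {d : ℕ} (S : Finset (Fin d)) : Fin d → Bool := fun j => decide (j ∈ S)

lemma supp_xOf {d : ℕ} (S : Finset (Fin d)) :
    Finset.univ.filter (fun j => xOf S j = true) = S := by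
  ext j; simp [xOf]

lemma xOf_injective {d : ℕ} : Function.Injective (xOf (d := d)) := by
  intro S T h
  have h2 := congrArg (fun f : Fin d → Bool =>
    Finset.univ.filter (fun j => f j = true)) h
  simpa [supp_xOf] using h2

end Stmt3Aux

theorem stmt3 (d : ℕ) (hd : 6 ≤ d) (hev : Even d) (t : ℕ) (ht : t = d / 2)
    (P : Finset (Fin d → Bool))
    (hP : P = Finset.univ.filter (fun x : Fin d → Bool =>
      (∀ j : Fin d, d - 2 ≤ (j : ℕ) → x j = false) ∧
      (Finset.univ.filter (fun j : Fin d => (j : ℕ) < d - 2 ∧ x j = true)).card = t))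
    (n1 n2 : Fin d → Bool)
    (hn1 : n1 = fun j : Fin d => decide ((j : ℕ) ≠ d - 1))
    (hn2 : n2 = fun j : Fin d => decide ((j : ℕ) ≠ d - 2))
    (𝒦 : Finset (Finset (Fin d)))
    (h𝒦 : 𝒦 = Finset.univ.filter (fun S : Finset (Fin d) =>
      (∀ j ∈ S, (j : ℕ) < d - 2) ∧ S.card = t)) :
    -- 0-1 loss formula
    (∀ K ⊆ 𝒦, Loss01 P n1 n2 K
        = (Nat.choose (d - 2) t - K.card) + 2 * (if 0 < K.card then 1 else 0)) ∧
    -- minimum 0-1 loss is 2, attained by K = 𝒦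
    (Loss01 P n1 n2 𝒦 = 2 ∧ ∀ K ⊆ 𝒦, Loss01 P n1 n2 𝒦 ≤ Loss01 P n1 n2 K) ∧
    -- the empty rule set is the unique minimizer of Hamming loss
    (∀ K ⊆ 𝒦, LossH P n1 n2 ∅ ≤ LossH P n1 n2 K ∧
        (LossH P n1 n2 K = LossH P n1 n2 ∅ → K = ∅)) ∧
    -- and its 0-1 loss is binom(d-2, t)
    Loss01 P n1 n2 ∅ = Nat.choose (d - 2) t := by
  subst hn1 hn2
  have hd2 : d % 2 = 0 := Nat.even_iff.mp hev
  have hmemK : ∀ S : Finset (Fin d), S ∈ 𝒦 ↔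
      (∀ j ∈ S, (j : ℕ) < d - 2) ∧ S.card = t := by
    intro S; rw [h𝒦]; simp
  have hmemP : ∀ x : Fin d → Bool, x ∈ P ↔
      (∀ j : Fin d, d - 2 ≤ (j : ℕ) → x j = false) ∧
      (Finset.univ.filter (fun j : Fin d => (j : ℕ) < d - 2 ∧ x j = true)).card = t := by
    intro x; rw [hP]; simp
  -- reconstruction of a point from its support
  have hrecon : ∀ x : Fin d → Bool,
      x = Stmt3Aux.xOf (Finset.univ.filter (fun j => x j = true)) := by
    intro x; funext j
    cases hx : x j <;> simp [Stmt3Aux.xOf, hx]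
  have hsupp : ∀ x ∈ P, Finset.univ.filter (fun j => x j = true)
      = Finset.univ.filter (fun j : Fin d => (j : ℕ) < d - 2 ∧ x j = true) := by
    intro x hx
    obtain ⟨h1, h2⟩ := (hmemP x).mp hx
    ext j
    simp only [Finset.mem_filter, Finset.mem_univ, true_and]
    constructor
    · intro h
      refine ⟨?_, h⟩
      by_contra hc
      have := h1 j (by omega)
      rw [this] at h; exact Bool.false_ne_true h
    · exact fun h => h.2
  have hsuppK : ∀ x ∈ P, Finset.univ.filter (fun j => x j = true) ∈ 𝒦 := by
    intro x hx
    obtain ⟨h1, h2⟩ := (hmemP x).mp hx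
    refine (hmemK _).mpr ⟨?_, ?_⟩
    · intro j hj
      rw [hsupp x hx] at hj
      exact ((Finset.mem_filter.mp hj).2).1
    · rw [hsupp x hx]; exact h2
  have hPimg : P = 𝒦.image Stmt3Aux.xOf := by
    ext x
    constructor
    · intro hx
      exact Finset.mem_image.mpr ⟨_, hsuppK x hx, (hrecon x).symm⟩
    · intro hx
      obtain ⟨S, hS, rfl⟩ := Finset.mem_image.mp hx
      obtain ⟨hS1, hS2⟩ := (hmemK S).mp hS
      refine (hmemP _).mpr ⟨?_, ?_⟩
      · intro j hj
        have hjS : j ∉ S := fun h => by have := hS1 j h; omega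
        simp [Stmt3Aux.xOf, hjS]
      · have hfe : Finset.univ.filter
            (fun j : Fin d => (j : ℕ) < d - 2 ∧ Stmt3Aux.xOf S j = true) = S := by
          ext j
          simp only [Finset.mem_filter, Finset.mem_univ, true_and, Stmt3Aux.xOf,
            decide_eq_true_eq]
          exact ⟨fun h => h.2, fun h => ⟨hS1 j h, h⟩⟩
        rw [hfe, hS2]
  have hKcard : 𝒦.card = Nat.choose (d - 2) t := by
    have hd0 : d - 2 < d := by omega
    have hA : (Finset.univ.filter (fun j : Fin d => (j : ℕ) < d - 2)).card = d - 2 := by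
      have : Finset.univ.filter (fun j : Fin d => (j : ℕ) < d - 2)
          = Finset.Iio (⟨d - 2, hd0⟩ : Fin d) := by
        ext j; simp [Fin.lt_def]
      rw [this, Fin.card_Iio]
    have hKpc : 𝒦 = (Finset.univ.filter (fun j : Fin d => (j : ℕ) < d - 2)).powersetCard t := by
      ext S
      rw [hmemK, Finset.mem_powersetCard]
      constructor
      · rintro ⟨h1, h2⟩
        exact ⟨fun j hj => by simp [h1 j hj], h2⟩
      · rintro ⟨h1, h2⟩
        refine ⟨fun j hj => ?_, h2⟩
        have := h1 hj; simp at this; exact this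
    rw [hKpc, Finset.card_powersetCard, hA]
  have hPcard : P.card = Nat.choose (d - 2) t := by
    rw [hPimg, Finset.card_image_of_injective _ Stmt3Aux.xOf_injective, hKcard]
  -- both negatives satisfy every rule
  have hsatn : ∀ S ∈ 𝒦,
      Satisfies (fun j : Fin d => decide ((j : ℕ) ≠ d - 1)) S ∧
      Satisfies (fun j : Fin d => decide ((j : ℕ) ≠ d - 2)) S := by
    intro S hS
    obtain ⟨hS1, -⟩ := (hmemK S).mp hS
    constructor <;> intro j hj <;>
      · have := hS1 j hj
        simp only [decide_eq_true_eq]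
        omega
  have hsat_iff : ∀ S ∈ 𝒦, ∀ x ∈ P, Satisfies x S ↔ x = Stmt3Aux.xOf S := by
    intro S hS x hx
    constructor
    · intro h
      have hsub : S ⊆ Finset.univ.filter (fun j => x j = true) := by
        intro j hj; simp [h j hj]
      have hcards : (Finset.univ.filter (fun j => x j = true)).card = t := by
        rw [hsupp x hx]; exact ((hmemP x).mp hx).2
      have hEq : S = Finset.univ.filter (fun j => x j = true) :=
        Finset.eq_of_subset_of_card_le hsub
          (le_of_eq (by rw [hcards, ((hmemK S).mp hS).2]))
      rw [hEq]; exact hrecon x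
    · rintro rfl
      intro j hj; simp [Stmt3Aux.xOf, hj]
  have hfilter : ∀ K ⊆ 𝒦, P.filter (fun x => ∀ S ∈ K, ¬ Satisfies x S)
      = P \ K.image Stmt3Aux.xOf := by
    intro K hK
    ext x
    simp only [Finset.mem_filter, Finset.mem_sdiff, Finset.mem_image]
    constructor
    · rintro ⟨hx, h⟩
      refine ⟨hx, ?_⟩
      rintro ⟨S, hS, rfl⟩
      exact h S hS (fun j hj => by simp [Stmt3Aux.xOf, hj])
    · rintro ⟨hx, h⟩
      exact ⟨hx, fun S hS hsat => h ⟨S, hS, ((hsat_iff S (hK hS) x hx).mp hsat).symm⟩⟩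
  have hfcard : ∀ K ⊆ 𝒦, (P.filter (fun x => ∀ S ∈ K, ¬ Satisfies x S)).card
      = Nat.choose (d - 2) t - K.card := by
    intro K hK
    rw [hfilter K hK,
      Finset.card_sdiff_of_subset (by rw [hPimg]; exact Finset.image_subset_image hK),
      hPcard, Finset.card_image_of_injective _ Stmt3Aux.xOf_injective]
  have hnfilter : ∀ K ⊆ 𝒦,
      K.filter (fun S => Satisfies (fun j : Fin d => decide ((j : ℕ) ≠ d - 1)) S) = K ∧
      K.filter (fun S => Satisfies (fun j : Fin d => decide ((j : ℕ) ≠ d - 2)) S) = K := by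
    intro K hK
    constructor <;> apply Finset.filter_true_of_mem <;> intro S hS
    · exact (hsatn S (hK hS)).1
    · exact (hsatn S (hK hS)).2
  have hC2 : 2 ≤ Nat.choose (d - 2) t := by
    have h1 : t + 1 ≤ d - 2 := by omega
    calc 2 ≤ t + 1 := by omega
      _ = Nat.choose (t + 1) t := (Nat.choose_succ_self_right t).symm
      _ ≤ Nat.choose (d - 2) t := Nat.choose_le_choose t h1
  have hformula : ∀ K ⊆ 𝒦, Loss01 P (fun j : Fin d => decide ((j : ℕ) ≠ d - 1))
      (fun j : Fin d => decide ((j : ℕ) ≠ d - 2)) K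
      = (Nat.choose (d - 2) t - K.card) + 2 * (if 0 < K.card then 1 else 0) := by
    intro K hK
    unfold Loss01
    rw [hfcard K hK]
    rcases K.eq_empty_or_nonempty with rfl | hKne
    · simp
    · obtain ⟨S, hS⟩ := hKne
      rw [if_pos ⟨S, hS, (hsatn S (hK hS)).1⟩, if_pos ⟨S, hS, (hsatn S (hK hS)).2⟩,
        if_pos (Finset.card_pos.mpr ⟨S, hS⟩)]
  have h𝒦pos : 0 < 𝒦.card := by rw [hKcard]; omega
  have hL𝒦 : Loss01 P (fun j : Fin d => decide ((j : ℕ) ≠ d - 1))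
      (fun j : Fin d => decide ((j : ℕ) ≠ d - 2)) 𝒦 = 2 := by
    rw [hformula 𝒦 (Finset.Subset.refl 𝒦), if_pos h𝒦pos, hKcard]
    omega
  have hLH : ∀ K ⊆ 𝒦, LossH P (fun j : Fin d => decide ((j : ℕ) ≠ d - 1))
      (fun j : Fin d => decide ((j : ℕ) ≠ d - 2)) K
      = Nat.choose (d - 2) t - K.card + (K.card + K.card) := by
    intro K hK
    unfold LossH
    rw [hfcard K hK, (hnfilter K hK).1, (hnfilter K hK).2]
  refine ⟨hformula, ⟨hL𝒦, ?_⟩, ?_, ?_⟩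
  · intro K hK
    rw [hL𝒦, hformula K hK]
    have hm : K.card ≤ Nat.choose (d - 2) t := hKcard ▸ Finset.card_le_card hK
    split_ifs <;> omega
  · intro K hK
    have hm : K.card ≤ Nat.choose (d - 2) t := hKcard ▸ Finset.card_le_card hK
    have hE := hLH ∅ (Finset.empty_subset _)
    rw [Finset.card_empty] at hE
    constructor
    · rw [hE, hLH K hK]; omega
    · intro h
      rw [hE, hLH K hK] at h
      exact Finset.card_eq_zero.mp (by omega)
  · have h0 := hformula ∅ (Finset.empty_subset _)
    simpa using h0
end

section
/- There is no constant Ψ ≥ 1 such that any rule set satisfying the Hamming equalized-odds constraints with tolerance ε must have true false-positive-rate gap between groups at most Ψ·ε. Concretely, for each n there is an all-negative two-group dataset with |G1| = |G2| = n and a rule set K satisfying the Hamming equalized-odds constraints with ε = 0, yet whose false positive rate is 1 on G1 and 1/n on G2, so the false-positive-rate gap is 1 − 1/n. -/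
/-- Hamming false-positive term of a group of `n` (all-negative) points. -/
def HamTerm {d n : ℕ} (g : Fin n → Fin d → Bool) (K : Finset (Finset (Fin d))) : ℚ :=
  (∑ i, ((K.filter (fun S => Satisfies (g i) S)).card : ℚ)) / (n : ℚ)

/-- True false positive rate of a group of `n` (all-negative) points. -/
def FPR {d n : ℕ} (g : Fin n → Fin d → Bool) (K : Finset (Finset (Fin d))) : ℚ :=
  ((Finset.univ.filter (fun i : Fin n => ∃ S ∈ K, Satisfies (g i) S)).card : ℚ) / (n : ℚ)

lemma main_construction (n : ℕ) (hn : 1 ≤ n) :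
    ∃ (d : ℕ) (g1 g2 : Fin n → Fin d → Bool) (K : Finset (Finset (Fin d))),
        HamTerm g1 K = HamTerm g2 K ∧
        FPR g1 K = 1 ∧ FPR g2 K = 1 / (n : ℚ) ∧
        FPR g1 K - FPR g2 K = 1 - 1 / (n : ℚ) := by
  have hn0 : (0 : ℚ) < (n : ℚ) := by exact_mod_cast hn
  set g1 : Fin n → Fin n → Bool := fun i j => decide (i = j) with hg1
  set g2 : Fin n → Fin n → Bool := fun i _ => decide (i.val = 0) with hg2
  set K : Finset (Finset (Fin n)) :=
    Finset.univ.image (fun j : Fin n => ({j} : Finset (Fin n))) with hK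
  have hcard : K.card = n := by
    rw [hK, Finset.card_image_of_injective _ (fun a b h => by simpa using h)]
    simp
  have h1 : ∀ i : Fin n,
      (K.filter (fun S => Satisfies (g1 i) S)) = {({i} : Finset (Fin n))} := by
    intro i
    ext S
    simp only [hK, Finset.mem_filter, Finset.mem_image, Finset.mem_univ, true_and,
      Finset.mem_singleton, Satisfies, hg1]
    constructor
    · rintro ⟨⟨j, rfl⟩, hs⟩
      have := hs j (Finset.mem_singleton_self j)
      simp at this
      subst this; rfl
    · rintro rfl
      exact ⟨⟨i, rfl⟩, by intro j hj; simp at hj; subst hj; simp⟩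
  have h2 : ∀ i : Fin n,
      (K.filter (fun S => Satisfies (g2 i) S)) = if i.val = 0 then K else ∅ := by
    intro i
    split_ifs with h
    · apply Finset.filter_true_of_mem
      intro S hS j hj
      simp [hg2, h]
    · apply Finset.filter_false_of_mem
      intro S hS
      rw [hK] at hS
      simp only [Finset.mem_image, Finset.mem_univ, true_and] at hS
      obtain ⟨j, rfl⟩ := hS
      intro hsat
      have := hsat j (Finset.mem_singleton_self j)
      simp [hg2, h] at this
  have hham : HamTerm g1 K = HamTerm g2 K := by
    unfold HamTerm
    congr 1
    simp only [h1, h2, Finset.card_singleton, Nat.cast_one, Finset.sum_const,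
      Finset.card_univ, Fintype.card_fin, nsmul_eq_mul, mul_one]
    rw [Finset.sum_eq_single (⟨0, hn⟩ : Fin n)]
    · simp [hcard]
    · intro b _ hb
      have : b.val ≠ 0 := fun h => hb (Fin.ext h)
      simp [this]
    · simp
  have hf1 : FPR g1 K = 1 := by
    unfold FPR
    have huniv : (Finset.univ.filter (fun i : Fin n => ∃ S ∈ K, Satisfies (g1 i) S))
        = Finset.univ := by
      apply Finset.eq_univ_of_forall
      intro i
      simp only [Finset.mem_filter, Finset.mem_univ, true_and]
      refine ⟨{i}, ?_, ?_⟩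
      · rw [hK]; exact Finset.mem_image_of_mem _ (Finset.mem_univ i)
      · intro j hj; simp at hj; subst hj; simp [hg1]
    rw [huniv, Finset.card_univ, Fintype.card_fin]
    field_simp
  have hf2 : FPR g2 K = 1 / (n : ℚ) := by
    unfold FPR
    have hone : (Finset.univ.filter (fun i : Fin n => ∃ S ∈ K, Satisfies (g2 i) S))
        = {(⟨0, hn⟩ : Fin n)} := by
      ext i
      simp only [Finset.mem_filter, Finset.mem_univ, true_and, Finset.mem_singleton]
      constructor
      · rintro ⟨S, hS, hsat⟩
        rw [hK] at hS
        simp only [Finset.mem_image, Finset.mem_univ, true_and] at hS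
        obtain ⟨j, rfl⟩ := hS
        have := hsat j (Finset.mem_singleton_self j)
        simp [hg2] at this
        exact Fin.ext this
      · rintro rfl
        refine ⟨{⟨0, hn⟩}, ?_, ?_⟩
        · rw [hK]; exact Finset.mem_image_of_mem _ (Finset.mem_univ _)
        · intro j hj; simp [hg2]
    rw [hone, Finset.card_singleton]
    norm_num
  exact ⟨n, g1, g2, K, hham, hf1, hf2, by rw [hf1, hf2]⟩

theorem stmt7 :
    (¬ ∃ Ψ : ℚ, 1 ≤ Ψ ∧
      ∀ (n d : ℕ) (g1 g2 : Fin n → Fin d → Bool) (K : Finset (Finset (Fin d))) (ε : ℚ),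
        1 ≤ n → 0 ≤ ε → |HamTerm g1 K - HamTerm g2 K| ≤ ε →
        |FPR g1 K - FPR g2 K| ≤ Ψ * ε) ∧
    (∀ n : ℕ, 1 ≤ n →
      ∃ (d : ℕ) (g1 g2 : Fin n → Fin d → Bool) (K : Finset (Finset (Fin d))),
        HamTerm g1 K = HamTerm g2 K ∧
        FPR g1 K = 1 ∧ FPR g2 K = 1 / (n : ℚ) ∧
        FPR g1 K - FPR g2 K = 1 - 1 / (n : ℚ)) := by
  constructor
  · rintro ⟨Ψ, hΨ, h⟩
    obtain ⟨d, g1, g2, K, heq, hf1, hf2, hgap⟩ := main_construction 2 (by norm_num)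
    have := h 2 d g1 g2 K 0 (by norm_num) le_rfl (by rw [heq]; simp)
    rw [hgap] at this
    norm_num at this
  · intro n hn
    exact main_construction n hn
end

section
/- Pruning criterion correctness for the pricing heuristic: let μ_i ≥ 0 for i in a positive index set P, λ ≥ 0, and for a rule k (a set of features) with complexity c(k) = 1 + |k| define the reduced cost ρ(k) = Σ_{i∈N} ŷ_k(x_i) − Σ_{i∈P} μ_i ŷ_k(x_i) + λ·c(k), where ŷ_k(x) = 𝟙(x satisfies k) ∈ {0,1}. If λ·(c(k)+1) − Σ_{i∈P} μ_i ŷ_k(x_i) > 0, then every rule k' strictly containing k has ρ(k') > 0 (no extension of k can have nonpositive reduced cost). -/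
/-- Pruning criterion correctness for the pricing heuristic: if
`λ (c(k)+1) − Σ_{i∈P} μ_i ŷ_k(x_i) > 0` then every strict extension `k'` of `k`
has strictly positive reduced cost. -/
theorem stmt10 (d : ℕ) (ιN ιP : Type) (N : Finset ιN) (P : Finset ιP)
    (xn : ιN → Fin d → Bool) (xp : ιP → Fin d → Bool)
    (μ : ιP → ℝ) (hμ : ∀ i ∈ P, 0 ≤ μ i) (lam : ℝ) (hlam : 0 ≤ lam)
    (k : Finset (Fin d))
    (hprune : 0 < lam * ((1 + (k.card : ℝ)) + 1)
        - ∑ i ∈ P, μ i * (if Satisfies (xp i) k then (1 : ℝ) else 0)) :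
    ∀ k' : Finset (Fin d), k ⊂ k' →
      0 < (∑ i ∈ N, (if Satisfies (xn i) k' then (1 : ℝ) else 0))
          - (∑ i ∈ P, μ i * (if Satisfies (xp i) k' then (1 : ℝ) else 0))
          + lam * (1 + (k'.card : ℝ)) := by
  intro k' hk
  have hsub : k ⊆ k' := hk.subset
  have hN : 0 ≤ ∑ i ∈ N, (if Satisfies (xn i) k' then (1 : ℝ) else 0) :=
    Finset.sum_nonneg fun i _ => by positivity
  have hP : ∑ i ∈ P, μ i * (if Satisfies (xp i) k' then (1 : ℝ) else 0)
      ≤ ∑ i ∈ P, μ i * (if Satisfies (xp i) k then (1 : ℝ) else 0) := by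
    apply Finset.sum_le_sum
    intro i hi
    by_cases h : Satisfies (xp i) k'
    · have h2 : Satisfies (xp i) k := fun j hj => h j (hsub hj)
      simp [h, h2]
    · simp only [h, if_false, mul_zero]
      exact mul_nonneg (hμ i hi) (by positivity)
  have hcard : (k.card : ℝ) + 1 ≤ (k'.card : ℝ) := by
    have := Finset.card_lt_card hk
    exact_mod_cast this
  have hlam' : lam * ((1 + (k.card : ℝ)) + 1) ≤ lam * (1 + (k'.card : ℝ)) := by
    apply mul_le_mul_of_nonneg_left _ hlam
    linarith
  linarith
end

section
/- Vertex-cover reduction correctness: let G = (V, E) be a finite undirected graph and λ = 1/(|V| + 2). Consider minimizing Σ_{e∈E} δ_e + λ(1 + Σ_{v∈V} z_v) over z ∈ {0,1}^V and δ_e ≥ 0 subject to δ_{uv} ≥ 1 − z_u − z_v for every edge {u,v} ∈ E. Then (a) the optimal value is strictly less than 1 (witnessed by z ≡ 1, δ ≡ 0, value (|V|+1)/(|V|+2)); (b) in every optimal solution δ = 0 and z is the indicator of a vertex cover; (c) the optimal value equals λ·(1 + τ(G)), where τ(G) is the minimum vertex cover size of G. -/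
/-- `V'` is a vertex cover of the edge set `E`. -/
def IsVertexCover {V : Type} (E : Finset (V × V)) (V' : Finset V) : Prop :=
  ∀ p ∈ E, p.1 ∈ V' ∨ p.2 ∈ V'

theorem stmt13 (V : Type) [Fintype V] [DecidableEq V] (E : Finset (V × V))
    (hE : ∀ p ∈ E, p.1 ≠ p.2)
    (lam : ℝ) (hlam : lam = 1 / ((Fintype.card V : ℝ) + 2))
    (tau : ℕ)
    (htau : tau = sInf {n : ℕ | ∃ V' : Finset V, IsVertexCover E V' ∧ V'.card = n})
    (Feasible : (V → ℝ) → ((V × V) → ℝ) → Prop)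
    (hFeas : Feasible = fun z δ =>
      (∀ v, z v = 0 ∨ z v = 1) ∧ (∀ p, 0 ≤ δ p) ∧ ∀ p ∈ E, 1 - z p.1 - z p.2 ≤ δ p)
    (Value : (V → ℝ) → ((V × V) → ℝ) → ℝ)
    (hVal : Value = fun z δ => (∑ p ∈ E, δ p) + lam * (1 + ∑ v, z v)) :
    (Feasible (fun _ => 1) (fun _ => 0) ∧
      Value (fun _ => 1) (fun _ => 0)
        = ((Fintype.card V : ℝ) + 1) / ((Fintype.card V : ℝ) + 2) ∧
      Value (fun _ => 1) (fun _ => 0) < 1) ∧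
    (∀ z δ, Feasible z δ → (∀ z' δ', Feasible z' δ' → Value z δ ≤ Value z' δ') →
      (∀ p ∈ E, δ p = 0) ∧
      IsVertexCover E (Finset.univ.filter (fun v => z v = 1))) ∧
    (∃ z δ, Feasible z δ ∧ ∀ z' δ', Feasible z' δ' → Value z δ ≤ Value z' δ') ∧
    (∀ z δ, Feasible z δ → (∀ z' δ', Feasible z' δ' → Value z δ ≤ Value z' δ') →
      Value z δ = lam * (1 + (tau : ℝ))) := by
  classical
  subst hFeas hVal
  beta_reduce
  set n : ℝ := (Fintype.card V : ℝ) with hn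
  have hn0 : (0:ℝ) ≤ n := Nat.cast_nonneg _
  have hn2 : (0:ℝ) < n + 2 := by linarith
  have hlam0 : 0 < lam := by rw [hlam]; positivity
  -- sum of 0/1 values equals card of the 1-set
  have hsum : ∀ z : V → ℝ, (∀ v, z v = 0 ∨ z v = 1) →
      ∑ v, z v = ((Finset.univ.filter (fun v => z v = 1)).card : ℝ) := by
    intro z hz
    have : (∑ v, z v) = ∑ v, (if z v = 1 then (1:ℝ) else 0) :=
      Finset.sum_congr rfl fun v _ => by rcases hz v with h | h <;> simp [h]
    rw [this, Finset.sum_boole]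
  -- value of witness in (a)
  have haval : ((∑ p ∈ E, (0:ℝ)) + lam * (1 + ∑ _v : V, (1:ℝ))) = (n + 1) / (n + 2) := by
    rw [hlam]
    simp [Finset.sum_const, Finset.card_univ, ← hn]
    field_simp
    ring
  have halt1 : (n + 1) / (n + 2) < 1 := by
    rw [div_lt_one hn2]; linarith
  have hwfeas : (∀ v : V, (1:ℝ) = 0 ∨ (1:ℝ) = 1) ∧ (∀ p : V × V, (0:ℝ) ≤ 0) ∧
      ∀ p ∈ E, (1:ℝ) - 1 - 1 ≤ 0 := ⟨fun _ => Or.inr rfl, fun _ => le_refl 0, fun _ _ => by norm_num⟩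
  -- (b) as a standalone fact
  have hb : ∀ (z : V → ℝ) (δ : (V × V) → ℝ), ((∀ v, z v = 0 ∨ z v = 1) ∧ (∀ p, 0 ≤ δ p) ∧
        ∀ p ∈ E, 1 - z p.1 - z p.2 ≤ δ p) →
      (∀ (z' : V → ℝ) (δ' : (V × V) → ℝ), ((∀ v, z' v = 0 ∨ z' v = 1) ∧ (∀ p, 0 ≤ δ' p) ∧
        ∀ p ∈ E, 1 - z' p.1 - z' p.2 ≤ δ' p) →
        (∑ p ∈ E, δ p) + lam * (1 + ∑ v, z v) ≤ (∑ p ∈ E, δ' p) + lam * (1 + ∑ v, z' v)) →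
      (∀ p ∈ E, δ p = 0) ∧
      IsVertexCover E (Finset.univ.filter (fun v => z v = 1)) := by
    intro z δ ⟨hz01, hδ0, hcon⟩ hopt
    have hzsum0 : 0 ≤ ∑ v, z v :=
      Finset.sum_nonneg fun v _ => by rcases hz01 v with h | h <;> simp [h]
    have hlt1 : (∑ p ∈ E, δ p) + lam * (1 + ∑ v, z v) < 1 := by
      calc (∑ p ∈ E, δ p) + lam * (1 + ∑ v, z v)
          ≤ (∑ p ∈ E, (0:ℝ)) + lam * (1 + ∑ _v : V, (1:ℝ)) :=
            hopt (fun _ => 1) (fun _ => 0) (by exact hwfeas)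
        _ = (n + 1) / (n + 2) := haval
        _ < 1 := halt1
    -- vertex cover
    have hcover : IsVertexCover E (Finset.univ.filter (fun v => z v = 1)) := by
      intro p hp
      by_contra hnc
      push_neg at hnc
      simp only [Finset.mem_filter, Finset.mem_univ, true_and] at hnc
      have h1 : z p.1 = 0 := (hz01 p.1).resolve_right hnc.1
      have h2 : z p.2 = 0 := (hz01 p.2).resolve_right hnc.2
      have hδp : (1:ℝ) ≤ δ p := by have := hcon p hp; rw [h1, h2] at this; linarith
      have hsl : δ p ≤ ∑ q ∈ E, δ q :=
        Finset.single_le_sum (fun q _ => hδ0 q) hp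
      nlinarith
    refine ⟨?_, hcover⟩
    -- δ vanishes on E at the optimum
    have hδ'feas : (∀ v, z v = 0 ∨ z v = 1) ∧
        (∀ p : V × V, (0:ℝ) ≤ max 0 (1 - z p.1 - z p.2)) ∧
        ∀ p ∈ E, 1 - z p.1 - z p.2 ≤ max 0 (1 - z p.1 - z p.2) :=
      ⟨hz01, fun p => le_max_left _ _, fun p _ => le_max_right _ _⟩
    have hle := hopt z (fun p => max 0 (1 - z p.1 - z p.2)) hδ'feas
    have hmax0 : ∀ p ∈ E, max (0:ℝ) (1 - z p.1 - z p.2) = 0 := by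
      intro p hp
      rcases hcover p hp with h | h <;>
      · simp only [Finset.mem_filter, Finset.mem_univ, true_and] at h
        have h1 : 0 ≤ z p.1 := by rcases hz01 p.1 with h' | h' <;> simp [h']
        have h2 : 0 ≤ z p.2 := by rcases hz01 p.2 with h' | h' <;> simp [h']
        rw [max_eq_left]; rw [h] at *; linarith
    have hsum0 : (∑ p ∈ E, max (0:ℝ) (1 - z p.1 - z p.2)) = 0 :=
      Finset.sum_eq_zero hmax0
    have : (∑ p ∈ E, δ p) ≤ 0 := by rw [hsum0] at hle; linarith
    have hall : (∑ p ∈ E, δ p) = 0 := le_antisymm this (Finset.sum_nonneg fun p _ => hδ0 p)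
    intro p hp
    have := (Finset.sum_eq_zero_iff_of_nonneg (fun q _ => hδ0 q)).mp hall p hp
    exact this
  -- minimum vertex cover exists
  have huniv : IsVertexCover E (Finset.univ : Finset V) :=
    fun p _ => Or.inl (Finset.mem_univ _)
  have hne : {m : ℕ | ∃ V' : Finset V, IsVertexCover E V' ∧ V'.card = m}.Nonempty :=
    ⟨Finset.univ.card, Finset.univ, huniv, rfl⟩
  obtain ⟨V₀, hV₀cov, hV₀card⟩ : ∃ V' : Finset V, IsVertexCover E V' ∧ V'.card = tau := by
    have := Nat.sInf_mem hne
    rw [← htau] at this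
    exact this
  have htau_le : ∀ V' : Finset V, IsVertexCover E V' → tau ≤ V'.card := by
    intro V' hV'
    rw [htau]
    exact Nat.sInf_le ⟨V', hV', rfl⟩
  -- indicator machinery
  set zS : Finset V → V → ℝ := fun S v => if v ∈ S then 1 else 0 with hzS
  set dS : Finset V → (V × V) → ℝ := fun S p => max 0 (1 - zS S p.1 - zS S p.2) with hdS
  have hzS01 : ∀ S v, zS S v = 0 ∨ zS S v = 1 := by
    intro S v; by_cases h : v ∈ S <;> simp [hzS, h]
  have hSfeas : ∀ S : Finset V, (∀ v, zS S v = 0 ∨ zS S v = 1) ∧ (∀ p, 0 ≤ dS S p) ∧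
      ∀ p ∈ E, 1 - zS S p.1 - zS S p.2 ≤ dS S p :=
    fun S => ⟨hzS01 S, fun p => le_max_left _ _, fun p _ => le_max_right _ _⟩
  set F : Finset V → ℝ := fun S => (∑ p ∈ E, dS S p) + lam * (1 + ∑ v, zS S v) with hF
  obtain ⟨S₀, _, hS₀min⟩ := Finset.exists_min_image (Finset.univ : Finset (Finset V)) F
    ⟨∅, Finset.mem_univ _⟩
  -- every feasible (z', δ') dominates F of its 1-set
  have hdom : ∀ (z' : V → ℝ) (δ' : (V × V) → ℝ), ((∀ v, z' v = 0 ∨ z' v = 1) ∧ (∀ p, 0 ≤ δ' p) ∧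
        ∀ p ∈ E, 1 - z' p.1 - z' p.2 ≤ δ' p) →
      F (Finset.univ.filter (fun v => z' v = 1)) ≤ (∑ p ∈ E, δ' p) + lam * (1 + ∑ v, z' v) := by
    intro z' δ' ⟨hz01, hδ0, hcon⟩
    set S' := Finset.univ.filter (fun v => z' v = 1) with hS'
    have hzeq : zS S' = z' := by
      funext v
      rcases hz01 v with h | h <;> simp [hzS, hS', h]
    rw [hF]
    simp only [hzeq]
    have : (∑ p ∈ E, dS S' p) ≤ ∑ p ∈ E, δ' p := by
      refine Finset.sum_le_sum fun p hp => ?_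
      rw [hdS]
      simp only [hzeq]
      exact max_le (hδ0 p) (hcon p hp)
    linarith
  have hS₀opt : ∀ (z' : V → ℝ) (δ' : (V × V) → ℝ), ((∀ v, z' v = 0 ∨ z' v = 1) ∧ (∀ p, 0 ≤ δ' p) ∧
        ∀ p ∈ E, 1 - z' p.1 - z' p.2 ≤ δ' p) →
      F S₀ ≤ (∑ p ∈ E, δ' p) + lam * (1 + ∑ v, z' v) := by
    intro z' δ' hf
    exact le_trans (hS₀min _ (Finset.mem_univ _)) (hdom z' δ' hf)
  -- assemble
  refine ⟨⟨hwfeas, haval, lt_of_eq_of_lt haval halt1⟩, hb, ⟨zS S₀, dS S₀, hSfeas S₀, hS₀opt⟩, ?_⟩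
  intro z δ hfeas hopt
  obtain ⟨hδE, hcov⟩ := hb z δ hfeas hopt
  -- value of the optimum: upper bound from min cover, lower bound from its own cover
  have hub : (∑ p ∈ E, δ p) + lam * (1 + ∑ v, z v) ≤ lam * (1 + (tau : ℝ)) := by
    have hfe : (∀ v, zS V₀ v = 0 ∨ zS V₀ v = 1) ∧ (∀ p : V × V, (0:ℝ) ≤ 0) ∧
        ∀ p ∈ E, 1 - zS V₀ p.1 - zS V₀ p.2 ≤ 0 := by
      refine ⟨hzS01 V₀, fun _ => le_refl 0, fun p hp => ?_⟩
      rcases hV₀cov p hp with h | h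
      · have h1 : zS V₀ p.1 = 1 := by simp [hzS, h]
        have h2 : zS V₀ p.2 = 0 ∨ zS V₀ p.2 = 1 := hzS01 V₀ p.2
        rcases h2 with h2 | h2 <;> rw [h1, h2] <;> norm_num
      · have h1 : zS V₀ p.2 = 1 := by simp [hzS, h]
        have h2 : zS V₀ p.1 = 0 ∨ zS V₀ p.1 = 1 := hzS01 V₀ p.1
        rcases h2 with h2 | h2 <;> rw [h1, h2] <;> norm_num
    have := hopt (zS V₀) (fun _ => 0) hfe
    have hzsum : ∑ v, zS V₀ v = (tau : ℝ) := by
      rw [hsum _ (hzS01 V₀)]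
      congr 1
      rw [← hV₀card]
      congr 1
      ext v
      simp [hzS]
    rw [hzsum] at this
    simpa using this
  have hlb : lam * (1 + (tau : ℝ)) ≤ (∑ p ∈ E, δ p) + lam * (1 + ∑ v, z v) := by
    have hδsum : (∑ p ∈ E, δ p) = 0 := Finset.sum_eq_zero hδE
    have hzsum := hsum z hfeas.1
    have hcard : (tau : ℝ) ≤ ((Finset.univ.filter (fun v => z v = 1)).card : ℝ) := by
      exact_mod_cast htau_le _ hcov
    rw [hδsum, hzsum]
    nlinarith
  linarith
end

section
/- Sharpness of the covering bound in column generation: if every rule has complexity c_k ≥ 2 and at most C/2 additional variables, each with reduced cost at least z_CG < 0, can enter the basis, then adding any set T of missing columns to the restricted LP decreases its optimal value by at most (C/2)·|z_CG|; formally, for any feasible solution w of the full LP, Σ_k (c_k − yᵀA_k) w_k ≥ z_CG · Σ_k w_k ≥ (C/2)·z_CG when z_CG < 0 and Σ_k w_k ≤ C/2. -/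
/-- Sharpness of the covering bound in column generation. -/
theorem stmt17 (nR : ℕ) (K : Type) [Fintype K]
    (A : Fin nR → K → ℝ) (obj : K → ℝ) (comp : K → ℝ) (C : ℝ)
    (y : Fin nR → ℝ) (zCG : ℝ) (hz : zCG < 0)
    (hred : ∀ k, zCG ≤ obj k - ∑ i, y i * A i k)
    (hcomp : ∀ k, 2 ≤ comp k)
    (w : K → ℝ) (hw : ∀ k, 0 ≤ w k) (hfeas : ∑ k, comp k * w k ≤ C) :
    zCG * (∑ k, w k) ≤ ∑ k, (obj k - ∑ i, y i * A i k) * w k ∧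
    (C / 2) * zCG ≤ zCG * (∑ k, w k) := by
  constructor
  · rw [Finset.mul_sum]
    exact Finset.sum_le_sum fun k _ => mul_le_mul_of_nonneg_right (hred k) (hw k)
  · have hsum : ∑ k, w k ≤ C / 2 := by
      have h2 : (2:ℝ) * ∑ k, w k ≤ ∑ k, comp k * w k := by
        rw [Finset.mul_sum]
        exact Finset.sum_le_sum fun k _ => mul_le_mul_of_nonneg_right (hcomp k) (hw k)
      linarith
    rw [mul_comm]; exact mul_le_mul_of_nonpos_left hsum hz.le
end
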